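/- arXiv:2408.15596 — 6 statements merged into one kernel-verified Lean document; each statement's English description precedes it below -/
import Mathlib

section
/- Let h, k : (A,κ) → (B,λ) be digitally (κ,λ)-continuous maps between digital images and let m > 0. Then the digital m-homotopic distance is bounded above by the digital homotopic distance: D_m(h,k) ≤ D(h,k). -/
namespace DigitalTop

/-- The `c_p`-adjacency relation on `ℤ^r`: distinct points such that at most `p`
coordinates differ by exactly `1`, and all coordinates not differing by `1` are equal. -/
def cAdj (r p : ℕ) (a a' : Fin r → ℤ) : Prop :=
  a ≠ a' ∧
  ((Finset.univ.filter fun q : Fin r => |a q - a' q| = 1).card ≤ p) ∧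
  ∀ s : Fin r, |a s - a' s| ≠ 1 → a s = a' s

/-- The `2`-adjacency on the digital interval in `ℤ`. -/
def intAdj (t t' : ℤ) : Prop := |t - t'| = 1

/-- Digital `(adjA, adjB)`-continuity of `f` on `A`, mapping into `B`. -/
def DigContinuousOn {α β : Type*} (adjA : α → α → Prop) (adjB : β → β → Prop)
    (A : Set α) (B : Set β) (f : α → β) : Prop :=
  (∀ a ∈ A, f a ∈ B) ∧
  ∀ a ∈ A, ∀ a' ∈ A, adjA a a' → f a = f a' ∨ adjB (f a) (f a')

/-- `K : A × [0,z]_ℤ → B` is a digital homotopy (in `z` steps): each stage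
`K (·, t)` is digitally continuous and each track `K (a, ·)` is digitally
`(2, adjB)`-continuous on `[0,z]_ℤ`. -/
def IsDigHomotopy {α β : Type*} (adjA : α → α → Prop) (adjB : β → β → Prop)
    (A : Set α) (B : Set β) (z : ℕ) (K : α → ℤ → β) : Prop :=
  (∀ t ∈ Set.Icc (0 : ℤ) (z : ℤ), DigContinuousOn adjA adjB A B fun a => K a t) ∧
  ∀ a ∈ A, ∀ t ∈ Set.Icc (0 : ℤ) (z : ℤ), ∀ t' ∈ Set.Icc (0 : ℤ) (z : ℤ),
    intAdj t t' → K a t = K a t' ∨ adjB (K a t) (K a t')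

/-- `h` and `k` are digitally `(adjA, adjB)`-homotopic on `A` (into `B`). -/
def DigHomotopic {α β : Type*} (adjA : α → α → Prop) (adjB : β → β → Prop)
    (A : Set α) (B : Set β) (h k : α → β) : Prop :=
  ∃ (z : ℕ) (K : α → ℤ → β),
    IsDigHomotopy adjA adjB A B z K ∧
    (∀ a ∈ A, K a 0 = h a) ∧ (∀ a ∈ A, K a (z : ℤ) = k a)

/-- `(A, adjA)` is digitally connected: any two points of `A` are joined by a
digital path in `A` whose consecutive points are equal or adjacent. -/
def DigConnected {α : Type*} (adjA : α → α → Prop) (A : Set α) : Prop :=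
  ∀ a ∈ A, ∀ b ∈ A, ∃ (n : ℕ) (f : ℕ → α),
    f 0 = a ∧ f n = b ∧ (∀ i ≤ n, f i ∈ A) ∧
    ∀ i < n, f i = f (i + 1) ∨ adjA (f i) (f (i + 1))

/-- `adj ≥_d adj'`: `adj` dominates `adj'`. -/
def Dominates {α : Type*} (adj adj' : α → α → Prop) : Prop :=
  ∀ a a', adj a a' → adj' a a'

/-- The normal (strong) product adjacency `NP(adjA, adjB)` on a product. -/
def NP {α β : Type*} (adjA : α → α → Prop) (adjB : β → β → Prop) :
    α × β → α × β → Prop :=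
  fun x y => x ≠ y ∧ (x.1 = y.1 ∨ adjA x.1 y.1) ∧ (x.2 = y.2 ∨ adjB x.2 y.2)

/-- The normal (strong) product adjacency `NP_n(adjB, …, adjB)` on `Bⁿ`. -/
def NPn {β : Type*} (adjB : β → β → Prop) (n : ℕ) :
    (Fin n → β) → (Fin n → β) → Prop :=
  fun x y => x ≠ y ∧ ∀ i, x i = y i ∨ adjB (x i) (y i)

/-- `X` satisfies the digital `m`-homotopic-distance condition for `h, k`: every
digitally continuous map `φ` from every `m`-dimensional digital complex `(P, c_δ)`
into `X` satisfies `h ∘ φ ≃ k ∘ φ`. -/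
def DmAt {α β : Type*} (m : ℕ) (adjA : α → α → Prop) (adjB : β → β → Prop)
    (X : Set α) (B : Set β) (h k : α → β) : Prop :=
  ∀ P : Set (Fin m → ℤ), P.Finite →
    ∀ δ : ℕ, 1 ≤ δ → δ ≤ m →
      ∀ φ : (Fin m → ℤ) → α,
        DigContinuousOn (cAdj m δ) adjA P X φ →
        DigHomotopic (cAdj m δ) adjB P B (h ∘ φ) (k ∘ φ)

/-- The digital `m`-homotopic distance `D_m(h, k)` (an element of `ℕ∞`,
`⊤` if no finite decomposition exists). -/
noncomputable def Dm {α β : Type*} (m : ℕ) (adjA : α → α → Prop) (adjB : β → β → Prop)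
    (A : Set α) (B : Set β) (h k : α → β) : ℕ∞ :=
  sInf {n : ℕ∞ | ∃ q : ℕ, n = (q : ℕ∞) ∧ ∃ X : Fin (q + 1) → Set α,
    A = ⋃ j, X j ∧ ∀ j, DmAt m adjA adjB (X j) B h k}

/-- The digital homotopic distance `D(h, k)`. -/
noncomputable def Ddist {α β : Type*} (adjA : α → α → Prop) (adjB : β → β → Prop)
    (A : Set α) (B : Set β) (h k : α → β) : ℕ∞ :=
  sInf {n : ℕ∞ | ∃ q : ℕ, n = (q : ℕ∞) ∧ ∃ X : Fin (q + 1) → Set α,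
    A = ⋃ j, X j ∧ ∀ j, DigHomotopic adjA adjB (X j) B h k}

/-- `X` satisfies the digital higher `m`-homotopic-distance condition for
`h₁, …, h_n`: pushed forward along any `φ` from an `m`-dimensional digital
complex into `X`, consecutive maps become digitally homotopic. -/
def DmAtH {α β : Type*} (m : ℕ) (adjA : α → α → Prop) (adjB : β → β → Prop)
    (X : Set α) (B : Set β) {n : ℕ} (h : Fin n → α → β) : Prop :=
  ∀ P : Set (Fin m → ℤ), P.Finite →
    ∀ δ : ℕ, 1 ≤ δ → δ ≤ m →
      ∀ φ : (Fin m → ℤ) → α,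
        DigContinuousOn (cAdj m δ) adjA P X φ →
        ∀ i : Fin n, ∀ hi : (i : ℕ) + 1 < n,
          DigHomotopic (cAdj m δ) adjB P B (h i ∘ φ) (h ⟨(i : ℕ) + 1, hi⟩ ∘ φ)

/-- The digital higher `m`-homotopic distance `D_m(h₁, …, h_n)`. -/
noncomputable def DmH {α β : Type*} (m : ℕ) (adjA : α → α → Prop) (adjB : β → β → Prop)
    (A : Set α) (B : Set β) {n : ℕ} (h : Fin n → α → β) : ℕ∞ :=
  sInf {k : ℕ∞ | ∃ q : ℕ, k = (q : ℕ∞) ∧ ∃ X : Fin (q + 1) → Set α,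
    A = ⋃ j, X j ∧ ∀ j, DmAtH m adjA adjB (X j) B h}

/-- The digital higher homotopic distance `D(h₁, …, h_n)`. -/
noncomputable def DdistH {α β : Type*} (adjA : α → α → Prop) (adjB : β → β → Prop)
    (A : Set α) (B : Set β) {n : ℕ} (h : Fin n → α → β) : ℕ∞ :=
  sInf {k : ℕ∞ | ∃ q : ℕ, k = (q : ℕ∞) ∧ ∃ X : Fin (q + 1) → Set α,
    A = ⋃ j, X j ∧ ∀ j, ∀ i : Fin n, ∀ hi : (i : ℕ) + 1 < n,
      DigHomotopic adjA adjB (X j) B (h i) (h ⟨(i : ℕ) + 1, hi⟩)}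

/-- `X` satisfies the digital `m`-LS-category condition in `A`: for every `φ` from an
`m`-dimensional digital complex into `X`, the composite with the inclusion
`X ↪ A` is digitally nullhomotopic in `A`. -/
def CatmAt {α : Type*} (m : ℕ) (adjA : α → α → Prop) (X A : Set α) : Prop :=
  ∀ P : Set (Fin m → ℤ), P.Finite →
    ∀ δ : ℕ, 1 ≤ δ → δ ≤ m →
      ∀ φ : (Fin m → ℤ) → α,
        DigContinuousOn (cAdj m δ) adjA P X φ →
        ∃ a₀ ∈ A, DigHomotopic (cAdj m δ) adjA P A φ (fun _ => a₀)

/-- The digital `m`-Lusternik–Schnirelmann category `cat_m(A, adjA)`. -/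
noncomputable def Catm {α : Type*} (m : ℕ) (adjA : α → α → Prop) (A : Set α) : ℕ∞ :=
  sInf {n : ℕ∞ | ∃ q : ℕ, n = (q : ℕ∞) ∧ ∃ X : Fin (q + 1) → Set α,
    A = ⋃ j, X j ∧ ∀ j, CatmAt m adjA (X j) A}

/-- `X` satisfies the digital `m`-LS-category condition for the map `h`. -/
def CatmMapAt {α β : Type*} (m : ℕ) (adjA : α → α → Prop) (adjB : β → β → Prop)
    (X : Set α) (B : Set β) (h : α → β) : Prop :=
  ∀ P : Set (Fin m → ℤ), P.Finite →
    ∀ δ : ℕ, 1 ≤ δ → δ ≤ m →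
      ∀ φ : (Fin m → ℤ) → α,
        DigContinuousOn (cAdj m δ) adjA P X φ →
        ∃ b₀ ∈ B, DigHomotopic (cAdj m δ) adjB P B (h ∘ φ) (fun _ => b₀)

/-- The digital `m`-Lusternik–Schnirelmann category `cat_m(h; adjA, adjB)` of a map. -/
noncomputable def CatmMap {α β : Type*} (m : ℕ) (adjA : α → α → Prop) (adjB : β → β → Prop)
    (A : Set α) (B : Set β) (h : α → β) : ℕ∞ :=
  sInf {n : ℕ∞ | ∃ q : ℕ, n = (q : ℕ∞) ∧ ∃ X : Fin (q + 1) → Set α,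
    A = ⋃ j, X j ∧ ∀ j, CatmMapAt m adjA adjB (X j) B h}

/-- The digital path space `A^{[0,z]_ℤ}`: digitally `(2, adjA)`-continuous maps
`[0,z]_ℤ → A`. -/
def PathSpace {α : Type*} (adjA : α → α → Prop) (A : Set α) (z : ℕ) : Set (ℤ → α) :=
  {ϑ | DigContinuousOn intAdj adjA (Set.Icc (0 : ℤ) (z : ℤ)) A ϑ}

/-- The adjacency on the digital path space `A^{[0,z]_ℤ}`. -/
def pathAdj {α : Type*} (adjA : α → α → Prop) (z : ℕ) : (ℤ → α) → (ℤ → α) → Prop :=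
  fun ϑ θ => ∀ t ∈ Set.Icc (0 : ℤ) (z : ℤ), ∀ t' ∈ Set.Icc (0 : ℤ) (z : ℤ),
    (t = t' ∨ intAdj t t') → ϑ t = θ t' ∨ adjA (ϑ t) (θ t')

/-- The digital `m`-topological complexity `TC^m(A, adjA)`: the least `q` such
that `A × A = X_0 ∪ ⋯ ∪ X_q` where each `X_j` carries a digitally continuous
`s_j : X_j → A^{[0,z]_ℤ}` with `π ∘ s_j ∘ φ ≃ φ` for every digitally continuous
`φ : P → X_j` from every `m`-dimensional digital complex `(P, c_δ)`. -/
noncomputable def TCm {α : Type*} (m : ℕ) (adjA : α → α → Prop) (A : Set α) : ℕ∞ :=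
  sInf {n : ℕ∞ | ∃ q : ℕ, n = (q : ℕ∞) ∧ ∃ X : Fin (q + 1) → Set (α × α),
    (A ×ˢ A) = ⋃ j, X j ∧
    ∀ j, ∃ (z : ℕ) (s : α × α → ℤ → α),
      DigContinuousOn (NP adjA adjA) (pathAdj adjA z) (X j) (PathSpace adjA A z) s ∧
      ∀ P : Set (Fin m → ℤ), P.Finite →
        ∀ δ : ℕ, 1 ≤ δ → δ ≤ m →
          ∀ φ : (Fin m → ℤ) → α × α,
            DigContinuousOn (cAdj m δ) (NP adjA adjA) P (X j) φ →
            DigHomotopic (cAdj m δ) (NP adjA adjA) P (A ×ˢ A)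
              (fun x => (s (φ x) 0, s (φ x) (z : ℤ))) φ}

/-- The digital `m`-topological complexity `TC^m(h; adjA, adjB)` of a map
`h : (A, adjA) → (B, adjB)`, using `π_h(ϑ) = (ϑ(0), h(ϑ(z)))`. -/
noncomputable def TCmMap {α β : Type*} (m : ℕ) (adjA : α → α → Prop) (adjB : β → β → Prop)
    (A : Set α) (B : Set β) (h : α → β) : ℕ∞ :=
  sInf {n : ℕ∞ | ∃ q : ℕ, n = (q : ℕ∞) ∧ ∃ X : Fin (q + 1) → Set (α × β),
    (A ×ˢ B) = ⋃ j, X j ∧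
    ∀ j, ∃ (z : ℕ) (s : α × β → ℤ → α),
      DigContinuousOn (NP adjA adjB) (pathAdj adjA z) (X j) (PathSpace adjA A z) s ∧
      ∀ P : Set (Fin m → ℤ), P.Finite →
        ∀ δ : ℕ, 1 ≤ δ → δ ≤ m →
          ∀ φ : (Fin m → ℤ) → α × β,
            DigContinuousOn (cAdj m δ) (NP adjA adjB) P (X j) φ →
            DigHomotopic (cAdj m δ) (NP adjA adjB) P (A ×ˢ B)
              (fun x => (s (φ x) 0, h (s (φ x) (z : ℤ)))) φ}

/-- A digital fibration: a digitally continuous map with the digital homotopy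
lifting property with respect to every digital image `(B, c_δ) ⊆ ℤ^d`. -/
def DigitalFibration {r r' : ℕ} (p p' : ℕ) (A : Set (Fin r → ℤ)) (A' : Set (Fin r' → ℤ))
    (h : (Fin r → ℤ) → (Fin r' → ℤ)) : Prop :=
  DigContinuousOn (cAdj r p) (cAdj r' p') A A' h ∧
  ∀ (d : ℕ) (B : Set (Fin d → ℤ)) (δ : ℕ), 1 ≤ δ → δ ≤ d →
    ∀ k : (Fin d → ℤ) → (Fin r → ℤ),
      DigContinuousOn (cAdj d δ) (cAdj r p) B A k →
      ∀ (z : ℕ) (K : (Fin d → ℤ) → ℤ → (Fin r' → ℤ)),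
        IsDigHomotopy (cAdj d δ) (cAdj r' p') B A' z K →
        (∀ b ∈ B, K b 0 = h (k b)) →
        ∃ K' : (Fin d → ℤ) → ℤ → (Fin r → ℤ),
          IsDigHomotopy (cAdj d δ) (cAdj r p) B A z K' ∧
          (∀ b ∈ B, ∀ t ∈ Set.Icc (0 : ℤ) (z : ℤ), h (K' b t) = K b t) ∧
          (∀ b ∈ B, K' b 0 = k b)

/-- A digital homotopy equivalence `ω : (A, adjA) → (B, adjB)`. -/
def DigHomotopyEquiv {α β : Type*} (adjA : α → α → Prop) (adjB : β → β → Prop)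
    (A : Set α) (B : Set β) (ω : α → β) : Prop :=
  DigContinuousOn adjA adjB A B ω ∧
  ∃ ω' : β → α, DigContinuousOn adjB adjA B A ω' ∧
    DigHomotopic adjA adjA A A (ω' ∘ ω) id ∧
    DigHomotopic adjB adjB B B (ω ∘ ω') id

theorem digHomotopic_dmAt {α β : Type*} {adjA : α → α → Prop} {adjB : β → β → Prop}
    {X : Set α} {B : Set β} {h k : α → β}
    (H : DigHomotopic adjA adjB X B h k) (m : ℕ) :
    DmAt m adjA adjB X B h k := by
  obtain ⟨z, K, ⟨Kstage, Ktrack⟩, K0, Kz⟩ := H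
  intro P _ δ _ _ φ hφ
  obtain ⟨φmem, φadj⟩ := hφ
  refine ⟨z, fun x t => K (φ x) t, ⟨?_, ?_⟩, ?_, ?_⟩
  · intro t ht
    obtain ⟨mem, adj⟩ := Kstage t ht
    refine ⟨fun a ha => mem _ (φmem a ha), fun a ha a' ha' hadj => ?_⟩
    rcases φadj a ha a' ha' hadj with h1 | h1
    · left; simp only [h1]
    · exact adj _ (φmem a ha) _ (φmem a' ha') h1
  · intro a ha t ht t' ht' hadj
    exact Ktrack _ (φmem a ha) t ht t' ht' hadj
  · intro a ha; exact K0 _ (φmem a ha)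
  · intro a ha; exact Kz _ (φmem a ha)

/-- The digital m-homotopic distance is bounded above by the
digital homotopic distance: `D_m(h,k) ≤ D(h,k)`. -/
theorem dm_le_ddist {r s p q : ℕ} (hp1 : 1 ≤ p) (hpr : p ≤ r) (hq1 : 1 ≤ q) (hqs : q ≤ s)
    (A : Set (Fin r → ℤ)) (B : Set (Fin s → ℤ))
    (h k : (Fin r → ℤ) → (Fin s → ℤ))
    (hh : DigContinuousOn (cAdj r p) (cAdj s q) A B h)
    (hk : DigContinuousOn (cAdj r p) (cAdj s q) A B k)
    (m : ℕ) (hm : 0 < m) :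
    Dm m (cAdj r p) (cAdj s q) A B h k ≤ Ddist (cAdj r p) (cAdj s q) A B h k := by
  apply sInf_le_sInf
  rintro n ⟨q', rfl, X, hX, hj⟩
  exact ⟨q', rfl, X, hX, fun j => digHomotopic_dmAt (hj j) m⟩

end DigitalTop
end

section
/- Let h₁, h₂, k₁, k₂ : (A,κ) → (B,λ) be digitally (κ,λ)-continuous maps with h₁ ≃ h₂ and k₁ ≃ k₂ (digitally (κ,λ)-homotopic). Then D_m(h₁,k₁) = D_m(h₂,k₂). -/
namespace DigitalTop

/-- Symmetry of digital homotopy. -/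
lemma digHomotopic_symm {α β : Type*} {adjA : α → α → Prop} {adjB : β → β → Prop}
    {A : Set α} {B : Set β} {h k : α → β}
    (H : DigHomotopic adjA adjB A B h k) : DigHomotopic adjA adjB A B k h := by
  obtain ⟨z, K, ⟨Hst, Htr⟩, H0, Hz⟩ := H
  refine ⟨z, fun a t => K a ((z : ℤ) - t), ⟨?_, ?_⟩, ?_, ?_⟩
  · intro t ht
    exact Hst ((z : ℤ) - t) (by simp only [Set.mem_Icc] at *; omega)
  · intro a ha t ht t' ht' hadj
    refine Htr a ha ((z : ℤ) - t) (by simp only [Set.mem_Icc] at *; omega)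
      ((z : ℤ) - t') (by simp only [Set.mem_Icc] at *; omega) ?_
    unfold intAdj at *
    have : (z : ℤ) - t - ((z : ℤ) - t') = t' - t := by ring
    rw [this, abs_sub_comm]; exact hadj
  · intro a ha; simpa using Hz a ha
  · intro a ha; simpa using H0 a ha

/-- Transitivity of digital homotopy. -/
lemma digHomotopic_trans {α β : Type*} {adjA : α → α → Prop} {adjB : β → β → Prop}
    {A : Set α} {B : Set β} {f g h : α → β}
    (H1 : DigHomotopic adjA adjB A B f g) (H2 : DigHomotopic adjA adjB A B g h) :
    DigHomotopic adjA adjB A B f h := by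
  obtain ⟨z1, K1, ⟨H1st, H1tr⟩, H10, H1z⟩ := H1
  obtain ⟨z2, K2, ⟨H2st, H2tr⟩, H20, H2z⟩ := H2
  refine ⟨z1 + z2, fun a t => if t ≤ (z1 : ℤ) then K1 a t else K2 a (t - z1),
    ⟨?_, ?_⟩, ?_, ?_⟩
  · intro t ht
    simp only [Set.mem_Icc, Nat.cast_add] at ht
    by_cases hle : t ≤ (z1 : ℤ)
    · obtain ⟨Hmem, Hadj⟩ := H1st t (by simp only [Set.mem_Icc]; omega)
      refine ⟨fun a ha => by simpa [hle] using Hmem a ha, ?_⟩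
      intro a ha a' ha' hadj
      simpa [hle] using Hadj a ha a' ha' hadj
    · obtain ⟨Hmem, Hadj⟩ := H2st (t - z1) (by simp only [Set.mem_Icc]; omega)
      refine ⟨fun a ha => by simpa [hle] using Hmem a ha, ?_⟩
      intro a ha a' ha' hadj
      simpa [hle] using Hadj a ha a' ha' hadj
  · intro a ha t ht t' ht' hadj
    simp only [Set.mem_Icc, Nat.cast_add] at ht ht'
    have hd : t - t' = 1 ∨ t - t' = -1 := by
      rcases (abs_eq (by norm_num : (0:ℤ) ≤ 1)).mp hadj with h | h
      · exact Or.inl h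
      · exact Or.inr h
    by_cases hle : t ≤ (z1 : ℤ) <;> by_cases hle' : t' ≤ (z1 : ℤ) <;>
      simp only [hle, hle', if_true, if_false, if_pos, if_neg, not_false_iff]
    · exact H1tr a ha t (by simp only [Set.mem_Icc]; omega)
        t' (by simp only [Set.mem_Icc]; omega) hadj
    · -- t = z1, t' = z1 + 1
      have htz : t = (z1 : ℤ) := by omega
      have ht'z : t' - z1 = 1 := by omega
      rw [htz, H1z a ha, ← H20 a ha]
      refine H2tr a ha 0 (by simp only [Set.mem_Icc]; omega)
        (t' - z1) (by simp only [Set.mem_Icc]; omega) ?_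
      unfold intAdj; rw [ht'z]; norm_num
    · -- t' = z1, t = z1 + 1
      have ht'z : t' = (z1 : ℤ) := by omega
      have htz : t - z1 = 1 := by omega
      rw [ht'z, H1z a ha, ← H20 a ha]
      refine H2tr a ha (t - z1) (by simp only [Set.mem_Icc]; omega)
        0 (by simp only [Set.mem_Icc]; omega) ?_
      unfold intAdj; rw [htz]; norm_num
    · refine H2tr a ha (t - z1) (by simp only [Set.mem_Icc]; omega)
        (t' - z1) (by simp only [Set.mem_Icc]; omega) ?_
      unfold intAdj at *
      have : t - z1 - (t' - z1) = t - t' := by ring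
      rw [this]; exact hadj
  · intro a ha
    show (if (0 : ℤ) ≤ (z1 : ℤ) then K1 a 0 else K2 a (0 - z1)) = f a
    rw [if_pos (Int.ofNat_nonneg z1)]
    exact H10 a ha
  · intro a ha
    show (if ((z1 + z2 : ℕ) : ℤ) ≤ (z1 : ℤ) then K1 a ((z1 + z2 : ℕ) : ℤ)
        else K2 a (((z1 + z2 : ℕ) : ℤ) - z1)) = h a
    by_cases hz2 : z2 = 0
    · subst hz2
      rw [if_pos (by push_cast; omega)]
      push_cast
      rw [add_zero, H1z a ha, ← H20 a ha]
      exact H2z a ha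
    · rw [if_neg (by push_cast; omega)]
      have : (((z1 + z2 : ℕ) : ℤ)) - z1 = (z2 : ℤ) := by push_cast; ring
      rw [this]
      exact H2z a ha

/-- Pullback of a digital homotopy along a digitally continuous map. -/
lemma digHomotopic_comp {α β γ : Type*} {adjP : γ → γ → Prop}
    {adjA : α → α → Prop} {adjB : β → β → Prop}
    {P : Set γ} {X A : Set α} {B : Set β} (hXA : X ⊆ A) {h₁ h₂ : α → β}
    (H : DigHomotopic adjA adjB A B h₁ h₂) {φ : γ → α}
    (hφ : DigContinuousOn adjP adjA P X φ) :
    DigHomotopic adjP adjB P B (h₁ ∘ φ) (h₂ ∘ φ) := by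
  obtain ⟨z, K, ⟨Hst, Htr⟩, H0, Hz⟩ := H
  refine ⟨z, fun a t => K (φ a) t, ⟨?_, ?_⟩, ?_, ?_⟩
  · intro t ht
    obtain ⟨Hmem, Hadj⟩ := Hst t ht
    refine ⟨fun a ha => Hmem _ (hXA (hφ.1 a ha)), ?_⟩
    intro a ha a' ha' hadj
    rcases hφ.2 a ha a' ha' hadj with he | hadj'
    · left; show K (φ a) t = K (φ a') t; rw [he]
    · exact Hadj _ (hXA (hφ.1 a ha)) _ (hXA (hφ.1 a' ha')) hadj'
  · intro a ha t ht t' ht' hadj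
    exact Htr (φ a) (hXA (hφ.1 a ha)) t ht t' ht' hadj
  · intro a ha; exact H0 (φ a) (hXA (hφ.1 a ha))
  · intro a ha; exact Hz (φ a) (hXA (hφ.1 a ha))

/-- `D_m` is invariant under digital homotopy of the maps:
if `h₁ ≃ h₂` and `k₁ ≃ k₂` then `D_m(h₁,k₁) = D_m(h₂,k₂)`. -/
theorem dm_homotopy_invariant {r s p q : ℕ}
    (hp1 : 1 ≤ p) (hpr : p ≤ r) (hq1 : 1 ≤ q) (hqs : q ≤ s)
    (A : Set (Fin r → ℤ)) (B : Set (Fin s → ℤ))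
    (h₁ h₂ k₁ k₂ : (Fin r → ℤ) → (Fin s → ℤ))
    (hh₁ : DigContinuousOn (cAdj r p) (cAdj s q) A B h₁)
    (hh₂ : DigContinuousOn (cAdj r p) (cAdj s q) A B h₂)
    (hk₁ : DigContinuousOn (cAdj r p) (cAdj s q) A B k₁)
    (hk₂ : DigContinuousOn (cAdj r p) (cAdj s q) A B k₂)
    (hh : DigHomotopic (cAdj r p) (cAdj s q) A B h₁ h₂)
    (hk : DigHomotopic (cAdj r p) (cAdj s q) A B k₁ k₂)
    (m : ℕ) (hm : 0 < m) :
    Dm m (cAdj r p) (cAdj s q) A B h₁ k₁ = Dm m (cAdj r p) (cAdj s q) A B h₂ k₂ := by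
  have key : ∀ (X : Set (Fin r → ℤ)), X ⊆ A →
      ∀ f₁ f₂ g₁ g₂ : (Fin r → ℤ) → (Fin s → ℤ),
      DigHomotopic (cAdj r p) (cAdj s q) A B f₁ f₂ →
      DigHomotopic (cAdj r p) (cAdj s q) A B g₁ g₂ →
      DmAt m (cAdj r p) (cAdj s q) X B f₁ g₁ →
      DmAt m (cAdj r p) (cAdj s q) X B f₂ g₂ := by
    intro X hX f₁ f₂ g₁ g₂ hf hg hD P hP δ hδ1 hδ2 φ hφ
    exact digHomotopic_trans
      (digHomotopic_trans (digHomotopic_symm (digHomotopic_comp hX hf hφ))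
        (hD P hP δ hδ1 hδ2 φ hφ))
      (digHomotopic_comp hX hg hφ)
  unfold Dm
  congr 1
  ext n
  constructor
  · rintro ⟨q', rfl, X, hcov, hall⟩
    refine ⟨q', rfl, X, hcov, fun j => ?_⟩
    exact key (X j) (hcov ▸ Set.subset_iUnion X j) h₁ h₂ k₁ k₂ hh hk (hall j)
  · rintro ⟨q', rfl, X, hcov, hall⟩
    refine ⟨q', rfl, X, hcov, fun j => ?_⟩
    exact key (X j) (hcov ▸ Set.subset_iUnion X j) h₂ h₁ k₂ k₁
      (digHomotopic_symm hh) (digHomotopic_symm hk) (hall j)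

end DigitalTop
end

section
/- Let h, k : (A,κ) → (B,λ) be digitally (κ,λ)-continuous maps and let α : (B,λ) → (C,ω) be a digitally (λ,ω)-continuous map. Then D_m(α∘h, α∘k) ≤ D_m(h,k). -/
namespace DigitalTop

/-- `D_m(α∘h, α∘k) ≤ D_m(h,k)` for any digitally continuous `α`. -/
theorem dm_postcompose {r s u p q w : ℕ}
    (hp1 : 1 ≤ p) (hpr : p ≤ r) (hq1 : 1 ≤ q) (hqs : q ≤ s) (hw1 : 1 ≤ w) (hwu : w ≤ u)
    (A : Set (Fin r → ℤ)) (B : Set (Fin s → ℤ)) (C : Set (Fin u → ℤ))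
    (h k : (Fin r → ℤ) → (Fin s → ℤ)) (α : (Fin s → ℤ) → (Fin u → ℤ))
    (hh : DigContinuousOn (cAdj r p) (cAdj s q) A B h)
    (hk : DigContinuousOn (cAdj r p) (cAdj s q) A B k)
    (hα : DigContinuousOn (cAdj s q) (cAdj u w) B C α)
    (m : ℕ) (hm : 0 < m) :
    Dm m (cAdj r p) (cAdj u w) A C (α ∘ h) (α ∘ k)
      ≤ Dm m (cAdj r p) (cAdj s q) A B h k := by
  apply sInf_le_sInf
  rintro n ⟨q', rfl, X, hcov, hX⟩
  refine ⟨q', rfl, X, hcov, fun j => ?_⟩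
  intro P hP δ hδ1 hδm φ hφ
  obtain ⟨z, K, ⟨hstage, htrack⟩, hK0, hKz⟩ := hX j P hP δ hδ1 hδm φ hφ
  refine ⟨z, fun a t => α (K a t), ⟨?_, ?_⟩, ?_, ?_⟩
  · intro t ht
    obtain ⟨hmem, hadj⟩ := hstage t ht
    refine ⟨fun a ha => hα.1 _ (hmem a ha), fun a ha a' ha' hadj' => ?_⟩
    rcases hadj a ha a' ha' hadj' with he | hb
    · exact Or.inl (congrArg α he)
    · exact hα.2 _ (hmem a ha) _ (hmem a' ha') hb
  · intro a ha t ht t' ht' hint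
    rcases htrack a ha t ht t' ht' hint with he | hb
    · exact Or.inl (congrArg α he)
    · exact hα.2 _ ((hstage t ht).1 a ha) _ ((hstage t' ht').1 a ha) hb
  · intro a ha
    simp [hK0 a ha, Function.comp]
  · intro a ha
    simp [hKz a ha, Function.comp]

end DigitalTop
end

section
/- Let h, k : (A,κ) → (B,λ) be digitally (κ,λ)-continuous maps and let β : (C,ω) → (A,κ) be a digitally (ω,κ)-continuous map. Then D_m(h∘β, k∘β) ≤ D_m(h,k). -/
namespace DigitalTop

/-- `D_m(h∘β, k∘β) ≤ D_m(h,k)` for any digitally continuous `β`. -/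
theorem dm_precompose {r s u p q w : ℕ}
    (hp1 : 1 ≤ p) (hpr : p ≤ r) (hq1 : 1 ≤ q) (hqs : q ≤ s) (hw1 : 1 ≤ w) (hwu : w ≤ u)
    (A : Set (Fin r → ℤ)) (B : Set (Fin s → ℤ)) (C : Set (Fin u → ℤ))
    (h k : (Fin r → ℤ) → (Fin s → ℤ)) (β : (Fin u → ℤ) → (Fin r → ℤ))
    (hh : DigContinuousOn (cAdj r p) (cAdj s q) A B h)
    (hk : DigContinuousOn (cAdj r p) (cAdj s q) A B k)
    (hβ : DigContinuousOn (cAdj u w) (cAdj r p) C A β)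
    (m : ℕ) (hm : 0 < m) :
    Dm m (cAdj u w) (cAdj s q) C B (h ∘ β) (k ∘ β)
      ≤ Dm m (cAdj r p) (cAdj s q) A B h k := by
  apply sInf_le_sInf
  rintro n ⟨q', rfl, X, hcov, hX⟩
  refine ⟨q', rfl, fun j => C ∩ β ⁻¹' (X j), ?_, ?_⟩
  · ext c
    simp only [Set.mem_iUnion, Set.mem_inter_iff, Set.mem_preimage]
    constructor
    · intro hc
      have : β c ∈ ⋃ j, X j := hcov ▸ hβ.1 c hc
      obtain ⟨j, hj⟩ := Set.mem_iUnion.mp this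
      exact ⟨j, hc, hj⟩
    · rintro ⟨j, hc, _⟩; exact hc
  · intro j P hP δ hδ1 hδm φ hφ
    have hβφ : DigContinuousOn (cAdj m δ) (cAdj r p) P (X j) (β ∘ φ) := by
      refine ⟨fun a ha => (hφ.1 a ha).2, fun a ha a' ha' hadj => ?_⟩
      rcases hφ.2 a ha a' ha' hadj with heq | hadj'
      · exact Or.inl (congrArg β heq)
      · exact hβ.2 (φ a) (hφ.1 a ha).1 (φ a') (hφ.1 a' ha').1 hadj'
    have := hX j P hP δ hδ1 hδm (β ∘ φ) hβφ
    exact this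

end DigitalTop
end

section
/- Let (A,κ) be a κ-connected digital image. Then the digital m-Lusternik–Schnirelmann category of A equals the digital m-homotopic distance between the identity map and a constant map: cat_m(A,κ) = D_m(1_A, c), where 1_A : A → A is the identity and c : A → A is a constant map. -/
namespace DigitalTop

lemma cAdj_symm {r p : ℕ} {a a' : Fin r → ℤ} (h : cAdj r p a a') : cAdj r p a' a := by
  obtain ⟨h1, h2, h3⟩ := h
  refine ⟨h1.symm, ?_, ?_⟩
  · simpa [abs_sub_comm] using h2
  · intro s hs
    exact (h3 s (by rwa [abs_sub_comm] at hs)).symm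

lemma digHomotopic_const_of_path {γ α : Type*} {adjP : γ → γ → Prop} {adjA : α → α → Prop}
    (hsymm : ∀ x y : α, adjA x y → adjA y x)
    {P : Set γ} {A : Set α} {n : ℕ} {f : ℕ → α} {b a₀ : α}
    (hf0 : f 0 = b) (hfn : f n = a₀) (hmem : ∀ i ≤ n, f i ∈ A)
    (hadj : ∀ i < n, f i = f (i + 1) ∨ adjA (f i) (f (i + 1))) :
    DigHomotopic adjP adjA P A (fun _ => b) (fun _ => a₀) := by
  refine ⟨n, fun _ t => f t.toNat, ⟨?_, ?_⟩, ?_, ?_⟩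
  · intro t ht
    obtain ⟨ht0, htz⟩ := ht
    refine ⟨fun a _ => hmem t.toNat (by omega), fun a _ a' _ _ => Or.inl rfl⟩
  · intro a _ t ht t' ht' hadjtt
    obtain ⟨ht0, htz⟩ := ht
    obtain ⟨ht0', htz'⟩ := ht'
    have h1 : |t - t'| = 1 := hadjtt
    show f t.toNat = f t'.toNat ∨ adjA (f t.toNat) (f t'.toNat)
    rcases (abs_eq (by norm_num : (0:ℤ) ≤ 1)).mp h1 with h | h
    · -- t = t' + 1
      have e : t.toNat = t'.toNat + 1 := by omega
      have hlt : t'.toNat < n := by omega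
      rw [e]
      rcases hadj t'.toNat hlt with h2 | h2
      · exact Or.inl h2.symm
      · exact Or.inr (hsymm _ _ h2)
    · -- t' = t + 1
      have e : t'.toNat = t.toNat + 1 := by omega
      have hlt : t.toNat < n := by omega
      rw [e]
      exact hadj t.toNat hlt
  · intro a _
    simpa using hf0
  · intro a _
    simpa using hfn

/-- For a κ-connected digital image `A`,
`cat_m(A,κ) = D_m(1_A, c)` for a constant map `c`. -/
theorem catm_eq_dm {r p : ℕ} (hp1 : 1 ≤ p) (hpr : p ≤ r)
    (A : Set (Fin r → ℤ)) (hAconn : DigConnected (cAdj r p) A)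
    (m : ℕ) (hm : 0 < m) :
    ∀ a₀ ∈ A,
      Catm m (cAdj r p) A
        = Dm m (cAdj r p) (cAdj r p) A A id (fun _ => a₀) := by
  intro a₀ ha₀
  have key : ∀ X : Set (Fin r → ℤ),
      CatmAt m (cAdj r p) X A ↔ DmAt m (cAdj r p) (cAdj r p) X A id (fun _ => a₀) := by
    intro X
    constructor
    · intro hC P hP δ hδ1 hδm φ hφ
      obtain ⟨b₀, hb₀, H1⟩ := hC P hP δ hδ1 hδm φ hφ
      obtain ⟨nn, f, hf0, hfn, hmem, hadj⟩ := hAconn b₀ hb₀ a₀ ha₀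
      have H2 : DigHomotopic (cAdj m δ) (cAdj r p) P A (fun _ => b₀) (fun _ => a₀) :=
        digHomotopic_const_of_path (fun _ _ h => cAdj_symm h) hf0 hfn hmem hadj
      exact digHomotopic_trans H1 H2
    · intro hD P hP δ hδ1 hδm φ hφ
      exact ⟨a₀, ha₀, hD P hP δ hδ1 hδm φ hφ⟩
  unfold Catm Dm
  congr 1
  ext n
  constructor
  · rintro ⟨q, rfl, X, hX, hall⟩
    exact ⟨q, rfl, X, hX, fun j => (key (X j)).mp (hall j)⟩
  · rintro ⟨q, rfl, X, hX, hall⟩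
    exact ⟨q, rfl, X, hX, fun j => (key (X j)).mpr (hall j)⟩

end DigitalTop
end

section
/- Let (A,κ) be a κ-connected digital image and let Δ : (A,κ) → (A × A, NP(κ,κ)) be the diagonal map Δ(a) = (a,a). Then the digital m-Lusternik–Schnirelmann category of the map Δ equals the digital m-Lusternik–Schnirelmann category of A: cat_m(Δ; κ, NP(κ,κ)) = cat_m(A,κ). -/
namespace DigitalTop

lemma catmAt_iff_catmMapAt_diag {r p m : ℕ} (A X : Set (Fin r → ℤ)) :
    CatmAt m (cAdj r p) X A ↔
      CatmMapAt m (cAdj r p) (NP (cAdj r p) (cAdj r p)) X (A ×ˢ A)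
        (fun a => (a, a)) := by
  constructor
  · intro h P hPf δ hδ1 hδm φ hφ
    obtain ⟨a₀, ha₀, z, K, ⟨hK1, hK2⟩, h0, hz⟩ := h P hPf δ hδ1 hδm φ hφ
    refine ⟨(a₀, a₀), Set.mk_mem_prod ha₀ ha₀, z, fun a t => (K a t, K a t),
      ⟨?_, ?_⟩, ?_, ?_⟩
    · intro t ht
      obtain ⟨hm1, hm2⟩ := hK1 t ht
      refine ⟨fun a ha => Set.mk_mem_prod (hm1 a ha) (hm1 a ha), ?_⟩
      intro a ha a' ha' hadj
      rcases hm2 a ha a' ha' hadj with he | hadj'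
      · exact Or.inl (congrArg (fun x => (x, x)) he)
      · exact Or.inr ⟨fun hh => hadj'.1 (congrArg Prod.fst hh),
          Or.inr hadj', Or.inr hadj'⟩
    · intro a ha t ht t' ht' hadj
      rcases hK2 a ha t ht t' ht' hadj with he | hadj'
      · left; simp only []; rw [he]
      · exact Or.inr ⟨fun hh => hadj'.1 (congrArg Prod.fst hh),
          Or.inr hadj', Or.inr hadj'⟩
    · intro a ha; simp [h0 a ha, Function.comp]
    · intro a ha; simp [hz a ha]
  · intro h P hPf δ hδ1 hδm φ hφ
    obtain ⟨b₀, hb₀, z, K, ⟨hK1, hK2⟩, h0, hz⟩ := h P hPf δ hδ1 hδm φ hφ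
    refine ⟨b₀.1, hb₀.1, z, fun a t => (K a t).1, ⟨?_, ?_⟩, ?_, ?_⟩
    · intro t ht
      obtain ⟨hm1, hm2⟩ := hK1 t ht
      refine ⟨fun a ha => (hm1 a ha).1, ?_⟩
      intro a ha a' ha' hadj
      rcases hm2 a ha a' ha' hadj with he | hnp
      · exact Or.inl (congrArg Prod.fst he)
      · exact hnp.2.1
    · intro a ha t ht t' ht' hadj
      rcases hK2 a ha t ht t' ht' hadj with he | hnp
      · left; simp only []; rw [he]
      · exact hnp.2.1
    · intro a ha; simp only []; rw [h0 a ha]; rfl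
    · intro a ha; simp only []; rw [hz a ha]

/-- For a κ-connected digital image `A` and the diagonal map
`Δ : (A,κ) → (A×A, NP(κ,κ))`, `cat_m(Δ; κ, NP(κ,κ)) = cat_m(A,κ)`. -/
theorem catmmap_diag_eq_catm {r p : ℕ} (hp1 : 1 ≤ p) (hpr : p ≤ r)
    (A : Set (Fin r → ℤ)) (hAconn : DigConnected (cAdj r p) A)
    (m : ℕ) (hm : 0 < m) :
    CatmMap m (cAdj r p) (NP (cAdj r p) (cAdj r p)) A (A ×ˢ A) (fun a => (a, a))
      = Catm m (cAdj r p) A := by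
  unfold CatmMap Catm
  congr 1
  ext n
  exact exists_congr fun q => and_congr_right fun _ =>
    exists_congr fun X => and_congr_right fun _ =>
      forall_congr' fun j => (catmAt_iff_catmMapAt_diag A (X j)).symm

end DigitalTop
end
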